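/- arXiv:2107.04081 — 3 statements merged into one kernel-verified Lean document; each statement's English description precedes it below -/
import Mathlib

section
/- Let K be a non-empty set of colors, let W ⊆ K^ω be Borel with ∅ ⊊ W ⊊ K^ω, and let F = ⟨S_A, S_B, O, ρ⟩ be a game form that is not determined. Then there exist a deterministic concurrent arena C = ⟨S_A, S_B, Q, q0, δ, K, col⟩ and a function h : O → Q with δ(q0,a,b) = h(ρ(a,b)) for all a ∈ S_A, b ∈ S_B (i.e., the local interaction at q0 is F up to a renaming of the outcomes), such that for every state q ≠ q0 the value δ(q,a,b) does not depend on (a,b) (all other local interactions are trivial, hence determined), and neither player has a winning color strategy in ⟨C, W⟩; moreover neither player has a winning deterministic state strategy. -/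
open MeasureTheory
open scoped Classical

universe u

/-- The cylinder set generated by a finite word. -/
def Cyl {K : Type u} (w : List K) : Set (ℕ → K) :=
  {ρ | ∀ i : ℕ, ∀ h : i < w.length, ρ i = w.get ⟨i, h⟩}

/-- The σ-algebra on `ℕ → K` generated by cylinder sets. -/
def BorelSeq (K : Type u) : MeasurableSpace (ℕ → K) :=
  MeasurableSpace.generateFrom {s | ∃ w : List K, s = Cyl w}

/-- A game form (given by its outcome function `ρ : S_A → S_B → O`) is determined if
for every subset `V` of outcomes, either Player A can force the outcome into `V`,
or Player B can force it out of `V`. -/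
def GFDetermined {SA SB O : Type u} (ρ : SA → SB → O) : Prop :=
  ∀ V : Set O, (∃ a, ∀ b, ρ a b ∈ V) ∨ (∃ b, ∀ a, ρ a b ∉ V)

/-- The color history `col(π_0,π_1) ⋯ col(π_{n-1},π_n)` of a play prefix. -/
def colorHist {Q K : Type u} (col : Q → Q → K) (π : ℕ → Q) (n : ℕ) : List K :=
  List.ofFn (fun i : Fin n => col (π i) (π (i + 1)))

/-- The color sequence of an infinite play. -/
def colorSeq {Q K : Type u} (col : Q → Q → K) (π : ℕ → Q) : ℕ → K :=
  fun n => col (π n) (π (n + 1))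

/-- `π` is a play consistent with Player A's color strategy `sA`. -/
def PlayA {A B Q K : Type u} (q0 : Q) (δ : Q → A → B → Q) (col : Q → Q → K)
    (sA : List K → Q → A) (π : ℕ → Q) : Prop :=
  π 0 = q0 ∧ ∀ n, ∃ b, π (n + 1) = δ (π n) (sA (colorHist col π n) (π n)) b

/-- `π` is a play consistent with Player B's color strategy `sB`. -/
def PlayB {A B Q K : Type u} (q0 : Q) (δ : Q → A → B → Q) (col : Q → Q → K)
    (sB : List K → Q → B) (π : ℕ → Q) : Prop :=
  π 0 = q0 ∧ ∀ n, ∃ a, π (n + 1) = δ (π n) a (sB (colorHist col π n) (π n))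

/-- Player A's color strategy `sA` is winning for objective `W`. -/
def WinA {A B Q K : Type u} (q0 : Q) (δ : Q → A → B → Q) (col : Q → Q → K)
    (W : Set (ℕ → K)) (sA : List K → Q → A) : Prop :=
  ∀ π : ℕ → Q, PlayA q0 δ col sA π → colorSeq col π ∈ W

/-- Player B's color strategy `sB` is winning for the objective complementary to `W`. -/
def WinB {A B Q K : Type u} (q0 : Q) (δ : Q → A → B → Q) (col : Q → Q → K)
    (W : Set (ℕ → K)) (sB : List K → Q → B) : Prop :=
  ∀ π : ℕ → Q, PlayB q0 δ col sB π → colorSeq col π ∉ W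

/-- The state history `π_0 ⋯ π_n` of a play prefix. -/
def stateHist {Q : Type u} (π : ℕ → Q) (n : ℕ) : List Q :=
  List.ofFn (fun i : Fin (n + 1) => π i)

/-- `π` is a play consistent with Player A's deterministic state strategy `tA`. -/
def PlayStateA {A B Q : Type u} (q0 : Q) (δ : Q → A → B → Q)
    (tA : List Q → A) (π : ℕ → Q) : Prop :=
  π 0 = q0 ∧ ∀ n, ∃ b, π (n + 1) = δ (π n) (tA (stateHist π n)) b

/-- `π` is a play consistent with Player B's deterministic state strategy `tB`. -/
def PlayStateB {A B Q : Type u} (q0 : Q) (δ : Q → A → B → Q)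
    (tB : List Q → B) (π : ℕ → Q) : Prop :=
  π 0 = q0 ∧ ∀ n, ∃ a, π (n + 1) = δ (π n) a (tB (stateHist π n))

/-- Player A's deterministic state strategy `tA` is winning for objective `W`. -/
def WinStateA {A B Q K : Type u} (q0 : Q) (δ : Q → A → B → Q) (col : Q → Q → K)
    (W : Set (ℕ → K)) (tA : List Q → A) : Prop :=
  ∀ π : ℕ → Q, PlayStateA q0 δ tA π → colorSeq col π ∈ W

/-- Player B's deterministic state strategy `tB` is winning for the complement of `W`. -/
def WinStateB {A B Q K : Type u} (q0 : Q) (δ : Q → A → B → Q) (col : Q → Q → K)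
    (W : Set (ℕ → K)) (tB : List Q → B) : Prop :=
  ∀ π : ℕ → Q, PlayStateB q0 δ tB π → colorSeq col π ∉ W

/-!
A non-determined game form has a set of outcomes `V` such that Player A cannot force the
outcome into `V` and Player B cannot force it out of `V`. Fix `α ∈ W` and `β ∉ W`. From `q0`
the arena moves to one of two branches according to whether the outcome lies in `V`; each
branch is a single forced path whose colors spell out `α`, resp. `β`. Whatever Player A plays
at `q0`, Player B has an answer leading to the `β`-branch, and symmetrically, so neither player
wins, whatever information their strategies observe.
-/

lemma not_gfDetermined_iff {SA SB O : Type u} (ρ : SA → SB → O) :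
    ¬ GFDetermined ρ ↔ ∃ V : Set O, (∀ a, ∃ b, ρ a b ∉ V) ∧ ∀ b, ∃ a, ρ a b ∈ V := by
  simp [GFDetermined]

namespace BranchArena

/-- `none` is the initial state; `some (x, n)` is the `n`-th state of branch `x`. -/
abbrev State : Type u := Option (Bool × ULift.{u} ℕ)

noncomputable def δ {SA SB O : Type u} (V : Set O) (ρ : SA → SB → O) :
    State.{u} → SA → SB → State.{u}
  | none, a, b => some (decide (ρ a b ∈ V), ⟨0⟩)
  | some (x, n), _, _ => some (x, ⟨n.down + 1⟩)

def col {K : Type u} (α β : ℕ → K) : State.{u} → State.{u} → K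
  | _, some (x, n) => cond x α β n.down
  | _, none => α 0

def play (x : Bool) : ℕ → State.{u}
  | 0 => none
  | n + 1 => some (x, ⟨n⟩)

variable {SA SB O K : Type u} {V : Set O} {ρ : SA → SB → O}

lemma δ_ne_none {q : State.{u}} (hq : q ≠ none) (a a' : SA) (b b' : SB) :
    δ V ρ q a b = δ V ρ q a' b' := by
  obtain ⟨⟨x, n⟩, rfl⟩ := Option.ne_none_iff_exists'.mp hq
  rfl

lemma colorSeq_play (α β : ℕ → K) (x : Bool) :
    colorSeq (col α β) (play x) = cond x α β := by
  funext n
  cases x <;> rfl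

/-- Only the first step of `play x` depends on the actions, and only through the branch `x`. -/
lemma play_succ (x : Bool) (a : ℕ → SA) (b : ℕ → SB) (h₀ : decide (ρ (a 0) (b 0) ∈ V) = x)
    (n : ℕ) : play x (n + 1) = δ V ρ (play x n) (a n) (b n) := by
  cases n with
  | zero => simp only [play, δ, h₀]
  | succ n => rfl

lemma playA_play (α β : ℕ → K) (sA : List K → State.{u} → SA) (b₀ : SB) {x : Bool}
    (h₀ : decide (ρ (sA [] none) b₀ ∈ V) = x) :
    PlayA none (δ V ρ) (col α β) sA (play x) :=
  ⟨rfl, fun n => ⟨b₀, play_succ x (fun n => sA (colorHist (col α β) (play x) n) (play x n))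
    (fun _ => b₀) h₀ n⟩⟩

lemma playB_play (α β : ℕ → K) (sB : List K → State.{u} → SB) (a₀ : SA) {x : Bool}
    (h₀ : decide (ρ a₀ (sB [] none) ∈ V) = x) :
    PlayB none (δ V ρ) (col α β) sB (play x) :=
  ⟨rfl, fun n => ⟨a₀, play_succ x (fun _ => a₀)
    (fun n => sB (colorHist (col α β) (play x) n) (play x n)) h₀ n⟩⟩

lemma playStateA_play (tA : List State.{u} → SA) (b₀ : SB) {x : Bool}
    (h₀ : decide (ρ (tA [none]) b₀ ∈ V) = x) :
    PlayStateA none (δ V ρ) tA (play x) :=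
  ⟨rfl, fun n => ⟨b₀, play_succ x (fun n => tA (stateHist (play x) n)) (fun _ => b₀) h₀ n⟩⟩

lemma playStateB_play (tB : List State.{u} → SB) (a₀ : SA) {x : Bool}
    (h₀ : decide (ρ a₀ (tB [none]) ∈ V) = x) :
    PlayStateB none (δ V ρ) tB (play x) :=
  ⟨rfl, fun n => ⟨a₀, play_succ x (fun _ => a₀) (fun n => tB (stateHist (play x) n)) h₀ n⟩⟩

end BranchArena

open BranchArena in
theorem stmt2_general {SA SB O K : Type u}
    (W : Set (ℕ → K))
    (hWne : W.Nonempty) (hWne' : Wᶜ.Nonempty)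
    (ρ : SA → SB → O) (hnd : ¬ GFDetermined ρ) :
    ∃ (Q : Type u) (_ : Nonempty Q) (q0 : Q) (δ : Q → SA → SB → Q)
      (col : Q → Q → K) (h : O → Q),
      (∀ a b, δ q0 a b = h (ρ a b)) ∧
      (∀ q : Q, q ≠ q0 → ∀ a a' b b', δ q a b = δ q a' b') ∧
      (¬ ∃ sA : List K → Q → SA, WinA q0 δ col W sA) ∧
      (¬ ∃ sB : List K → Q → SB, WinB q0 δ col W sB) ∧
      (¬ ∃ tA : List Q → SA, WinStateA q0 δ col W tA) ∧
      (¬ ∃ tB : List Q → SB, WinStateB q0 δ col W tB) := by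
  obtain ⟨V, hA, hB⟩ := (not_gfDetermined_iff ρ).mp hnd
  obtain ⟨α, hα⟩ := hWne
  obtain ⟨β, hβ⟩ := hWne'
  refine ⟨State.{u}, ⟨none⟩, none, BranchArena.δ V ρ, BranchArena.col α β,
    fun o => some (decide (o ∈ V), ⟨0⟩), fun _ _ => rfl, fun _ hq => δ_ne_none hq, ?_, ?_, ?_, ?_⟩
  · rintro ⟨sA, hsA⟩
    obtain ⟨b, hb⟩ := hA (sA [] none)
    have hwin := hsA _ (playA_play α β sA b (decide_eq_false hb))
    rw [colorSeq_play] at hwin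
    exact hβ hwin
  · rintro ⟨sB, hsB⟩
    obtain ⟨a, ha⟩ := hB (sB [] none)
    have hwin := hsB _ (playB_play α β sB a (decide_eq_true ha))
    rw [colorSeq_play] at hwin
    exact hwin hα
  · rintro ⟨tA, htA⟩
    obtain ⟨b, hb⟩ := hA (tA [none])
    have hwin := htA _ (playStateA_play tA b (decide_eq_false hb))
    rw [colorSeq_play] at hwin
    exact hβ hwin
  · rintro ⟨tB, htB⟩
    obtain ⟨a, ha⟩ := hB (tB [none])
    have hwin := htB _ (playStateB_play tB a (decide_eq_true ha))
    rw [colorSeq_play] at hwin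
    exact hwin hα

/-- For every non-trivial Borel objective `W` and every non-determined game form
`F = ⟨S_A, S_B, O, ρ⟩`, there is a deterministic concurrent arena whose local
interaction at the initial state is `F` (up to a renaming `h` of the outcomes) and
whose other local interactions are trivial, such that neither player has a winning
color strategy, nor even a winning deterministic state strategy. -/
theorem stmt2 {SA SB O K : Type u} [Nonempty SA] [Nonempty SB] [Nonempty O]
    [Nonempty K]
    (W : Set (ℕ → K)) (hW : MeasurableSet[BorelSeq K] W)
    (hWne : W.Nonempty) (hWne' : Wᶜ.Nonempty)
    (ρ : SA → SB → O) (hnd : ¬ GFDetermined ρ) :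
    ∃ (Q : Type u) (_ : Nonempty Q) (q0 : Q) (δ : Q → SA → SB → Q)
      (col : Q → Q → K) (h : O → Q),
      (∀ a b, δ q0 a b = h (ρ a b)) ∧
      (∀ q : Q, q ≠ q0 → ∀ a a' b b', δ q a b = δ q a' b') ∧
      (¬ ∃ sA : List K → Q → SA, WinA q0 δ col W sA) ∧
      (¬ ∃ sB : List K → Q → SB, WinB q0 δ col W sB) ∧
      (¬ ∃ tA : List Q → SA, WinStateA q0 δ col W tA) ∧
      (¬ ∃ tB : List Q → SB, WinStateB q0 δ col W tB) :=
  stmt2_general W hWne hWne' ρ hnd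
end

section
/- Let C = ⟨A, B, Q, q0, δ, K, col⟩ be a locally determined deterministic concurrent arena and W ⊆ K^ω. Then Player A has a winning color strategy in ⟨C, W⟩ if and only if Player A has a winning color strategy in the sequential game ⟨Seq(C), Seq(W)⟩, and likewise Player B has a winning color strategy in ⟨C, W⟩ if and only if Player B has one in ⟨Seq(C), Seq(W)⟩. In particular, ⟨C, W⟩ is determined if and only if ⟨Seq(C), Seq(W)⟩ is determined. -/
open MeasureTheory
open scoped Classical

universe u

/-- Transition function of the sequential version: from a Player A vertex `q`,
action `a` moves to `(q, a)`; from a Player B vertex `(q, a)`, Player B's action `b`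
moves to `δ q a b`. -/
def seqDelta {A B Q : Type u} (δ : Q → A → B → Q) :
    Q ⊕ Q × A → A → B → Q ⊕ Q × A
  | Sum.inl q, a, _ => Sum.inr (q, a)
  | Sum.inr qa, _, b => Sum.inl (δ qa.1 qa.2 b)

/-- Coloring of the sequential version: edges `(q, a) → q'` carry `some (col q q')`,
all other edges carry the fresh color `none`. -/
def seqCol {A Q K : Type u} (col : Q → Q → K) :
    Q ⊕ Q × A → Q ⊕ Q × A → Option K
  | Sum.inr qa, Sum.inl q' => some (col qa.1 q')
  | _, _ => none

/-- The length-`n` prefix of an infinite sequence, as a finite word. -/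
def prefixWord {D : Type u} (ρ : ℕ → D) (n : ℕ) : List D :=
  List.ofFn (fun i : Fin n => ρ i)

/-- A finite word is a prefix of an infinite sequence. -/
def IsPrefixOfSeq {K : Type u} (w : List K) (ρ : ℕ → K) : Prop :=
  ∀ i : ℕ, ∀ h : i < w.length, w.get ⟨i, h⟩ = ρ i

/-- `ρ ∈ K^ω` is the projection of `ρ' ∈ (Option K)^ω`: every erased prefix of `ρ'`
is a prefix of `ρ` and the lengths of the erased prefixes tend to infinity
(equivalently, `ρ'` has infinitely many `some` entries whose values, in order,
form `ρ`). -/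
def IsProjOf {K : Type u} (ρ : ℕ → K) (ρ' : ℕ → Option K) : Prop :=
  (∀ n : ℕ, IsPrefixOfSeq ((prefixWord ρ' n).reduceOption) ρ) ∧
  Filter.Tendsto (fun n => ((prefixWord ρ' n).reduceOption).length)
    Filter.atTop Filter.atTop

/-- The sequential version `Seq(W)` of an objective `W ⊆ K^ω`: the sequences in
`(Option K)^ω` with infinitely many `some` entries whose subsequence of values
lies in `W`. -/
def SeqObj {K : Type u} (W : Set (ℕ → K)) : Set (ℕ → Option K) :=
  {ρ' | ∃ ρ ∈ W, IsProjOf ρ ρ'}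

/-!
A play of `Seq(C)` alternates between vertices `q` and `(q, a)`, so it is the interleaving of a
play `π` of `C` with the actions `a_n` that Player A chose along it, and its color sequence is
that of `π` padded with `none`s; hence it lies in `Seq(W)` iff `π`'s colors lie in `W`. A color
strategy of either player therefore transfers between the two games by translating histories,
with one exception: Player B moves in `Seq(C)` after seeing Player A's action. Local determinacy
removes that advantage: if `f : A → B` is any way of answering Player A, then determinacy of
`F_q` applied to the outcomes `{δ q a' (f a') | a'}` yields a single `b` such that each outcome
`δ q a b` is also one of those outcomes.
-/

section SeqArena

variable {A B Q K : Type u}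

lemma GFDetermined.exists_forall_mem_range {SA SB O : Type u} {ρ : SA → SB → O}
    (hρ : GFDetermined ρ) (f : SA → SB) :
    ∃ b, ∀ a, ρ a b ∈ Set.range fun a' => ρ a' (f a') := by
  rcases hρ (Set.range fun a' => ρ a' (f a'))ᶜ with ⟨a, ha⟩ | ⟨b, hb⟩
  · exact absurd ⟨a, rfl⟩ (ha (f a))
  · exact ⟨b, fun a => not_not.mp (hb a)⟩

lemma IsProjOf.unique {ρ σ : ℕ → K} {ρ' : ℕ → Option K} (hρ : IsProjOf ρ ρ')
    (hσ : IsProjOf σ ρ') : ρ = σ := by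
  funext i
  obtain ⟨m, hm⟩ := (hρ.2.eventually_ge_atTop (i + 1)).exists
  rw [← hρ.1 m i (by omega), ← hσ.1 m i (by omega)]

lemma colorHist_succ (col : Q → Q → K) (π : ℕ → Q) (n : ℕ) :
    colorHist col π (n + 1) = colorHist col π n ++ [col (π n) (π (n + 1))] := by
  simp only [colorHist, List.ofFn_succ', Fin.val_castSucc, Fin.val_last, List.concat_eq_append]

lemma length_colorHist (col : Q → Q → K) (π : ℕ → Q) (n : ℕ) :
    (colorHist col π n).length = n := by
  simp [colorHist]

lemma isPrefixOfSeq_colorHist (col : Q → Q → K) (π : ℕ → Q) (n : ℕ) :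
    IsPrefixOfSeq (colorHist col π n) (colorSeq col π) := by
  intro i _
  simp [colorHist, colorSeq]

lemma prefixWord_colorSeq (col : Q → Q → K) (π : ℕ → Q) (n : ℕ) :
    prefixWord (colorSeq col π) n = colorHist col π n := rfl

lemma Nat.forall_iff_forall_two_mul_and_two_mul_add_one {p : ℕ → Prop} :
    (∀ m, p m) ↔ ∀ n, p (2 * n) ∧ p (2 * n + 1) := by
  refine ⟨fun h n => ⟨h _, h _⟩, fun h m => ?_⟩
  obtain ⟨n, rfl | rfl⟩ := Nat.even_or_odd' m
  exacts [(h n).1, (h n).2]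

def interleaveNone (h : List K) : List (Option K) :=
  h.flatMap fun c => [none, some c]

lemma interleaveNone_append_singleton (h : List K) (c : K) :
    interleaveNone (h ++ [c]) = interleaveNone h ++ [none, some c] := by
  simp [interleaveNone]

lemma reduceOption_interleaveNone (h : List K) : (interleaveNone h).reduceOption = h := by
  induction h with
  | nil => rfl
  | cons c h ih => simpa [interleaveNone, List.reduceOption_cons_of_none,
      List.reduceOption_cons_of_some] using ih

def liftPlay (π : ℕ → Q) (act : ℕ → A) (m : ℕ) : Q ⊕ Q × A :=
  if m % 2 = 0 then Sum.inl (π (m / 2)) else Sum.inr (π (m / 2), act (m / 2))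

section LiftPlay

variable (π : ℕ → Q) (act : ℕ → A) (n : ℕ)

lemma liftPlay_two_mul : liftPlay π act (2 * n) = Sum.inl (π n) := by
  simp [liftPlay]

lemma liftPlay_zero : liftPlay π act 0 = Sum.inl (π 0) :=
  liftPlay_two_mul π act 0

lemma liftPlay_two_mul_add_one : liftPlay π act (2 * n + 1) = Sum.inr (π n, act n) := by
  simp [liftPlay, Nat.add_mod, Nat.add_div]

lemma liftPlay_two_mul_add_two : liftPlay π act (2 * n + 1 + 1) = Sum.inl (π (n + 1)) := by
  rw [show 2 * n + 1 + 1 = 2 * (n + 1) by ring, liftPlay_two_mul]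

lemma colorHist_liftPlay_two_mul (col : Q → Q → K) :
    colorHist (seqCol col) (liftPlay π act) (2 * n) = interleaveNone (colorHist col π n) := by
  induction n with
  | zero => rfl
  | succ n ih =>
    rw [show 2 * (n + 1) = 2 * n + 1 + 1 by ring, colorHist_succ, colorHist_succ, ih,
      colorHist_succ, interleaveNone_append_singleton, liftPlay_two_mul,
      liftPlay_two_mul_add_one, liftPlay_two_mul_add_two]
    simp [seqCol]

lemma colorHist_liftPlay_two_mul_add_one (col : Q → Q → K) :
    colorHist (seqCol col) (liftPlay π act) (2 * n + 1)
      = interleaveNone (colorHist col π n) ++ [none] := by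
  rw [colorHist_succ, colorHist_liftPlay_two_mul, liftPlay_two_mul, liftPlay_two_mul_add_one]
  rfl

lemma reduceOption_colorHist_liftPlay (col : Q → Q → K) (m : ℕ) :
    (colorHist (seqCol col) (liftPlay π act) m).reduceOption = colorHist col π (m / 2) := by
  obtain ⟨n, rfl | rfl⟩ := Nat.even_or_odd' m
  · rw [colorHist_liftPlay_two_mul, reduceOption_interleaveNone, Nat.mul_div_cancel_left _ two_pos]
  · rw [colorHist_liftPlay_two_mul_add_one, List.reduceOption_append,
      reduceOption_interleaveNone, show (2 * n + 1) / 2 = n by omega]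
    simp [List.reduceOption_cons_of_none]

lemma isProjOf_colorSeq_liftPlay (col : Q → Q → K) :
    IsProjOf (colorSeq col π) (colorSeq (seqCol col) (liftPlay π act)) := by
  simp only [IsProjOf, prefixWord_colorSeq, reduceOption_colorHist_liftPlay, length_colorHist]
  exact ⟨fun m => isPrefixOfSeq_colorHist col π (m / 2),
    Filter.tendsto_atTop_atTop.mpr fun N => ⟨2 * N, fun m hm => by omega⟩⟩

lemma colorSeq_liftPlay_mem_seqObj_iff (col : Q → Q → K) (W : Set (ℕ → K)) :
    colorSeq (seqCol col) (liftPlay π act) ∈ SeqObj W ↔ colorSeq col π ∈ W := by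
  refine ⟨fun ⟨ρ, hρ, hproj⟩ => ?_, fun h => ⟨_, h, isProjOf_colorSeq_liftPlay π act col⟩⟩
  rwa [(isProjOf_colorSeq_liftPlay π act col).unique hproj]

variable (δ : Q → A → B → Q) (col : Q → Q → K) (q0 : Q)

lemma playA_liftPlay_iff [Nonempty B] (σ : List (Option K) → Q ⊕ Q × A → A) :
    PlayA (Sum.inl q0) (seqDelta δ) (seqCol col) σ (liftPlay π act) ↔
      π 0 = q0 ∧ ∀ n, act n = σ (interleaveNone (colorHist col π n)) (Sum.inl (π n)) ∧
        ∃ b, π (n + 1) = δ (π n) (act n) b := by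
  rw [PlayA, Nat.forall_iff_forall_two_mul_and_two_mul_add_one]
  simp only [liftPlay_zero, liftPlay_two_mul, liftPlay_two_mul_add_one, liftPlay_two_mul_add_two,
    colorHist_liftPlay_two_mul, seqDelta, Sum.inl.injEq, Sum.inr.injEq, Prod.mk.injEq, true_and,
    exists_const]

lemma playB_liftPlay_iff [Nonempty A] (σ : List (Option K) → Q ⊕ Q × A → B) :
    PlayB (Sum.inl q0) (seqDelta δ) (seqCol col) σ (liftPlay π act) ↔
      π 0 = q0 ∧ ∀ n, π (n + 1) = δ (π n) (act n)
        (σ (interleaveNone (colorHist col π n) ++ [none]) (Sum.inr (π n, act n))) := by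
  rw [PlayB, Nat.forall_iff_forall_two_mul_and_two_mul_add_one]
  simp only [liftPlay_zero, liftPlay_two_mul, liftPlay_two_mul_add_one, liftPlay_two_mul_add_two,
    colorHist_liftPlay_two_mul_add_one, seqDelta, Sum.inl.injEq, Sum.inr.injEq, Prod.mk.injEq,
    true_and, exists_const, exists_eq']

end LiftPlay

lemma exists_eq_liftPlay (δ : Q → A → B → Q) (q0 : Q) {π' : ℕ → Q ⊕ Q × A}
    (h0 : π' 0 = Sum.inl q0) (hstep : ∀ m, ∃ a b, π' (m + 1) = seqDelta δ (π' m) a b) :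
    ∃ (π : ℕ → Q) (act : ℕ → A), π' = liftPlay π act := by
  have hround : ∀ n, ∃ q a, π' (2 * n) = Sum.inl q ∧ π' (2 * n + 1) = Sum.inr (q, a) := by
    intro n
    induction n with
    | zero =>
      obtain ⟨a, b, h1⟩ := hstep 0
      exact ⟨q0, a, h0, by rw [h1, h0, seqDelta]⟩
    | succ n ih =>
      obtain ⟨q, a, -, hodd⟩ := ih
      obtain ⟨_, b, h2⟩ := hstep (2 * n + 1)
      obtain ⟨a', b', h3⟩ := hstep (2 * n + 1 + 1)
      rw [hodd, seqDelta] at h2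
      rw [h2, seqDelta] at h3
      exact ⟨δ q a b, a', h2, h3⟩
  choose π act heven hodd using hround
  refine ⟨π, act, funext fun m => ?_⟩
  obtain ⟨n, rfl | rfl⟩ := Nat.even_or_odd' m
  · rw [heven, liftPlay_two_mul]
  · rw [hodd, liftPlay_two_mul_add_one]

variable {δ : Q → A → B → Q} {col : Q → Q → K} {q0 : Q} {W : Set (ℕ → K)}

noncomputable def seqStrategyA [Nonempty A] (sA : List K → Q → A) :
    List (Option K) → Q ⊕ Q × A → A :=
  fun h v => v.elim (sA h.reduceOption) fun _ => Classical.arbitrary A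

noncomputable def seqStrategyB [Nonempty B] (sB : List K → Q → B) :
    List (Option K) → Q ⊕ Q × A → B :=
  fun h v => v.elim (fun _ => Classical.arbitrary B) fun qa => sB h.reduceOption qa.1

lemma WinA.seq [Nonempty A] [Nonempty B] {sA : List K → Q → A} (hsA : WinA q0 δ col W sA) :
    WinA (Sum.inl q0) (seqDelta δ) (seqCol col) (SeqObj W) (seqStrategyA sA) := by
  intro π' hplay
  obtain ⟨h0, hstep⟩ := hplay
  obtain ⟨π, act, rfl⟩ := exists_eq_liftPlay δ q0 h0 fun m => ⟨_, hstep m⟩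
  obtain ⟨hπ0, hπ⟩ := (playA_liftPlay_iff π act δ col q0 _).1 ⟨h0, hstep⟩
  rw [colorSeq_liftPlay_mem_seqObj_iff]
  refine hsA π ⟨hπ0, fun n => ?_⟩
  have hact : act n = sA (colorHist col π n) (π n) := by
    simpa only [seqStrategyA, Sum.elim_inl, reduceOption_interleaveNone] using (hπ n).1
  exact hact ▸ (hπ n).2

lemma WinA.of_seq [Nonempty B] {σA : List (Option K) → Q ⊕ Q × A → A}
    (hσA : WinA (Sum.inl q0) (seqDelta δ) (seqCol col) (SeqObj W) σA) :
    WinA q0 δ col W fun h q => σA (interleaveNone h) (Sum.inl q) := by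
  intro π hplay
  obtain ⟨h0, hstep⟩ := hplay
  let act n := σA (interleaveNone (colorHist col π n)) (Sum.inl (π n))
  rw [← colorSeq_liftPlay_mem_seqObj_iff π act col W]
  exact hσA _ ((playA_liftPlay_iff π act δ col q0 σA).2 ⟨h0, fun n => ⟨rfl, hstep n⟩⟩)

lemma WinB.seq [Nonempty A] [Nonempty B] {sB : List K → Q → B} (hsB : WinB q0 δ col W sB) :
    WinB (Sum.inl q0) (seqDelta δ) (seqCol col) (SeqObj W) (seqStrategyB sB) := by
  intro π' hplay
  obtain ⟨h0, hstep⟩ := hplay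
  obtain ⟨π, act, rfl⟩ := exists_eq_liftPlay δ q0 h0 fun m => (hstep m).imp fun _ h => ⟨_, h⟩
  obtain ⟨hπ0, hπ⟩ := (playB_liftPlay_iff π act δ col q0 _).1 ⟨h0, hstep⟩
  rw [colorSeq_liftPlay_mem_seqObj_iff]
  refine hsB π ⟨hπ0, fun n => ⟨act n, ?_⟩⟩
  simpa [seqStrategyB, List.reduceOption_append, reduceOption_interleaveNone] using hπ n

lemma WinB.of_seq [Nonempty A] (hloc : ∀ q, GFDetermined (δ q))
    {σB : List (Option K) → Q ⊕ Q × A → B}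
    (hσB : WinB (Sum.inl q0) (seqDelta δ) (seqCol col) (SeqObj W) σB) :
    ∃ sB, WinB q0 δ col W sB := by
  choose sB hsB using fun (h : List K) (q : Q) => (hloc q).exists_forall_mem_range
    fun a => σB (interleaveNone h ++ [none]) (Sum.inr (q, a))
  refine ⟨sB, fun π hplay => ?_⟩
  obtain ⟨h0, hstep⟩ := hplay
  have hresponse : ∀ n, ∃ a, π (n + 1) = δ (π n) a
      (σB (interleaveNone (colorHist col π n) ++ [none]) (Sum.inr (π n, a))) := by
    intro n
    obtain ⟨a, ha⟩ := hstep n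
    obtain ⟨a', ha'⟩ := hsB (colorHist col π n) (π n) a
    exact ⟨a', ha.trans ha'.symm⟩
  choose act hact using hresponse
  rw [← colorSeq_liftPlay_mem_seqObj_iff π act col W]
  exact hσB _ ((playB_liftPlay_iff π act δ col q0 σB).2 ⟨h0, hact⟩)

end SeqArena

theorem stmt5_general {A B Q K : Type u} [Nonempty A] [Nonempty B]
    (q0 : Q) (δ : Q → A → B → Q) (col : Q → Q → K)
    (hloc : ∀ q : Q, GFDetermined (δ q)) (W : Set (ℕ → K)) :
    ((∃ sA : List K → Q → A, WinA q0 δ col W sA) ↔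
      (∃ σA : List (Option K) → Q ⊕ Q × A → A,
        WinA (Sum.inl q0) (seqDelta δ) (seqCol col) (SeqObj W) σA)) ∧
    ((∃ sB : List K → Q → B, WinB q0 δ col W sB) ↔
      (∃ σB : List (Option K) → Q ⊕ Q × A → B,
        WinB (Sum.inl q0) (seqDelta δ) (seqCol col) (SeqObj W) σB)) ∧
    (((∃ sA : List K → Q → A, WinA q0 δ col W sA) ∨
      (∃ sB : List K → Q → B, WinB q0 δ col W sB)) ↔
     ((∃ σA : List (Option K) → Q ⊕ Q × A → A,
        WinA (Sum.inl q0) (seqDelta δ) (seqCol col) (SeqObj W) σA) ∨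
      (∃ σB : List (Option K) → Q ⊕ Q × A → B,
        WinB (Sum.inl q0) (seqDelta δ) (seqCol col) (SeqObj W) σB))) := by
  have iffA : (∃ sA : List K → Q → A, WinA q0 δ col W sA) ↔
      ∃ σA : List (Option K) → Q ⊕ Q × A → A,
        WinA (Sum.inl q0) (seqDelta δ) (seqCol col) (SeqObj W) σA :=
    ⟨fun ⟨_, hsA⟩ => ⟨_, hsA.seq⟩, fun ⟨_, hσA⟩ => ⟨_, hσA.of_seq⟩⟩
  have iffB : (∃ sB : List K → Q → B, WinB q0 δ col W sB) ↔
      ∃ σB : List (Option K) → Q ⊕ Q × A → B,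
        WinB (Sum.inl q0) (seqDelta δ) (seqCol col) (SeqObj W) σB :=
    ⟨fun ⟨_, hsB⟩ => ⟨_, hsB.seq⟩, fun ⟨_, hσB⟩ => hσB.of_seq hloc⟩
  exact ⟨iffA, iffB, or_congr iffA iffB⟩

/-- For a locally determined deterministic concurrent game `⟨C, W⟩`: each player has
a winning color strategy in `⟨C, W⟩` iff she has one in the sequential version
`⟨Seq(C), Seq(W)⟩`; in particular `⟨C, W⟩` is determined iff `⟨Seq(C), Seq(W)⟩` is. -/
theorem stmt5 {A B Q K : Type u} [Nonempty A] [Nonempty B] [Nonempty Q] [Nonempty K]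
    (q0 : Q) (δ : Q → A → B → Q) (col : Q → Q → K)
    (hloc : ∀ q : Q, GFDetermined (δ q)) (W : Set (ℕ → K)) :
    ((∃ sA : List K → Q → A, WinA q0 δ col W sA) ↔
      (∃ σA : List (Option K) → Q ⊕ Q × A → A,
        WinA (Sum.inl q0) (seqDelta δ) (seqCol col) (SeqObj W) σA)) ∧
    ((∃ sB : List K → Q → B, WinB q0 δ col W sB) ↔
      (∃ σB : List (Option K) → Q ⊕ Q × A → B,
        WinB (Sum.inl q0) (seqDelta δ) (seqCol col) (SeqObj W) σB)) ∧
    (((∃ sA : List K → Q → A, WinA q0 δ col W sA) ∨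
      (∃ sB : List K → Q → B, WinB q0 δ col W sB)) ↔
     ((∃ σA : List (Option K) → Q ⊕ Q × A → A,
        WinA (Sum.inl q0) (seqDelta δ) (seqCol col) (SeqObj W) σA) ∨
      (∃ σB : List (Option K) → Q ⊕ Q × A → B,
        WinB (Sum.inl q0) (seqDelta δ) (seqCol col) (SeqObj W) σB))) :=
  stmt5_general q0 δ col hloc W
end

section
/- Let C = ⟨A, B, Q, q0, δ, K, col⟩ be a locally determined deterministic concurrent arena and W ⊆ K^ω. If Player B has a winning color strategy in the sequential game ⟨Seq(C), Seq(W)⟩, then Player B has a winning color strategy in ⟨C, W⟩. -/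
open MeasureTheory
open scoped Classical

universe u

/-!
Player B plays in `C` by simulating her sequential strategy `σB`. At a state `q`, the
sequential strategy answers each action `a` of Player A with some `σB(…, (q, a))`; local
determinacy of `F_q`, applied to the set of outcomes that this answer function can produce,
yields a single action `b` whose outcomes are all among them. Every play of `C` consistent with
the resulting strategy therefore lifts, by inserting the intermediate vertices `(q, a)`, to a
play of `Seq(C)` consistent with `σB`, whose colors are those of the original play padded
with `none`; hence it lies in `Seq(W)` as soon as the original play's colors lie in `W`.
-/

theorem GFDetermined.exists_forall_exists_eq {SA SB O : Type u} {ρ : SA → SB → O}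
    (h : GFDetermined ρ) (f : SA → SB) : ∃ b, ∀ a, ∃ a', ρ a b = ρ a' (f a') := by
  rcases h {o | ¬ ∃ a', o = ρ a' (f a')} with ⟨a, ha⟩ | ⟨b, hb⟩
  · exact absurd ⟨a, rfl⟩ (ha (f a))
  · exact ⟨b, fun a => not_not.mp (hb a)⟩

section Words

variable {K D : Type u}

/-- The embedding of color histories of `C` into those of `Seq(C)`. -/
def seqHist (c : List K) : List (Option K) :=
  c.flatMap fun k => [none, some k]

@[simp]
lemma seqHist_append (c : List K) (k : K) :
    seqHist (c ++ [k]) = seqHist c ++ [none, some k] := by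
  simp [seqHist]

@[simp]
lemma reduceOption_seqHist (c : List K) : (seqHist c).reduceOption = c := by
  induction c with
  | nil => rfl
  | cons k c ih => simpa [seqHist, List.reduceOption_append] using ih

def padNone (ρ : ℕ → K) : ℕ → Option K :=
  fun m => if m % 2 = 0 then none else some (ρ (m / 2))

@[simp]
lemma padNone_two_mul (ρ : ℕ → K) (n : ℕ) : padNone ρ (2 * n) = none := by
  simp [padNone]

@[simp]
lemma padNone_two_mul_add_one (ρ : ℕ → K) (n : ℕ) : padNone ρ (2 * n + 1) = some (ρ n) := by
  simp [padNone, Nat.add_mod, show (2 * n + 1) / 2 = n by omega]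

lemma prefixWord_succ (ρ : ℕ → D) (n : ℕ) :
    prefixWord ρ (n + 1) = prefixWord ρ n ++ [ρ n] := by
  rw [prefixWord, prefixWord, List.ofFn_succ', List.concat_eq_append]
  rfl

lemma prefixWord_padNone_two_mul (ρ : ℕ → K) (n : ℕ) :
    prefixWord (padNone ρ) (2 * n) = seqHist (prefixWord ρ n) := by
  induction n with
  | zero => rfl
  | succ n ih => simp [Nat.mul_succ, prefixWord_succ, ih]

lemma prefixWord_padNone_two_mul_add_one (ρ : ℕ → K) (n : ℕ) :
    prefixWord (padNone ρ) (2 * n + 1) = seqHist (prefixWord ρ n) ++ [none] := by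
  rw [prefixWord_succ, prefixWord_padNone_two_mul, padNone_two_mul]

lemma reduceOption_prefixWord_padNone (ρ : ℕ → K) (m : ℕ) :
    (prefixWord (padNone ρ) m).reduceOption = prefixWord ρ (m / 2) := by
  obtain ⟨n, rfl | rfl⟩ := Nat.even_or_odd' m
  · simp [prefixWord_padNone_two_mul]
  · simp [prefixWord_padNone_two_mul_add_one, List.reduceOption_append, Nat.add_div]

lemma isPrefixOfSeq_prefixWord (ρ : ℕ → D) (n : ℕ) : IsPrefixOfSeq (prefixWord ρ n) ρ := by
  simp [IsPrefixOfSeq, prefixWord]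

lemma isProjOf_padNone (ρ : ℕ → K) : IsProjOf ρ (padNone ρ) := by
  refine ⟨fun n => ?_, ?_⟩
  · rw [reduceOption_prefixWord_padNone]
    exact isPrefixOfSeq_prefixWord ρ _
  · refine (Nat.tendsto_div_const_atTop two_ne_zero).congr fun m => ?_
    rw [reduceOption_prefixWord_padNone, prefixWord, List.length_ofFn]

end Words

section Plays

variable {A B Q K : Type u}

lemma colorHist_eq_prefixWord (col : Q → Q → K) (π : ℕ → Q) (n : ℕ) :
    colorHist col π n = prefixWord (colorSeq col π) n :=
  rfl

/-- The play of `Seq(C)` visiting `π 0, (π 0, a 0), π 1, (π 1, a 1), …`. -/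
def interleavePlay (π : ℕ → Q) (a : ℕ → A) : ℕ → Q ⊕ Q × A :=
  fun m => if m % 2 = 0 then Sum.inl (π (m / 2)) else Sum.inr (π (m / 2), a (m / 2))

@[simp]
lemma interleavePlay_two_mul (π : ℕ → Q) (a : ℕ → A) (n : ℕ) :
    interleavePlay π a (2 * n) = Sum.inl (π n) := by
  simp [interleavePlay]

@[simp]
lemma interleavePlay_two_mul_add_one (π : ℕ → Q) (a : ℕ → A) (n : ℕ) :
    interleavePlay π a (2 * n + 1) = Sum.inr (π n, a n) := by
  simp [interleavePlay, Nat.add_mod, show (2 * n + 1) / 2 = n by omega]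

lemma colorSeq_seqCol_interleavePlay (col : Q → Q → K) (π : ℕ → Q) (a : ℕ → A) :
    colorSeq (seqCol col) (interleavePlay π a) = padNone (colorSeq col π) := by
  funext m
  obtain ⟨n, rfl | rfl⟩ := Nat.even_or_odd' m
  · simp [colorSeq, seqCol]
  · simp [colorSeq, seqCol, show 2 * n + 1 + 1 = 2 * (n + 1) by ring]

lemma playB_interleavePlay {q0 : Q} {δ : Q → A → B → Q} {col : Q → Q → K}
    {σB : List (Option K) → Q ⊕ Q × A → B} {π : ℕ → Q} {a : ℕ → A} (h0 : π 0 = q0)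
    (hstep : ∀ n, π (n + 1) =
      δ (π n) (a n) (σB (seqHist (colorHist col π n) ++ [none]) (Sum.inr (π n, a n)))) :
    PlayB (Sum.inl q0) (seqDelta δ) (seqCol col) σB (interleavePlay π a) := by
  refine ⟨h0 ▸ interleavePlay_two_mul π a 0, fun m => ⟨a (m / 2), ?_⟩⟩
  obtain ⟨n, rfl | rfl⟩ := Nat.even_or_odd' m
  · simp [seqDelta]
  · have hhist : colorHist (seqCol col) (interleavePlay π a) (2 * n + 1) =
        seqHist (colorHist col π n) ++ [none] := by
      rw [colorHist_eq_prefixWord, colorSeq_seqCol_interleavePlay,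
        prefixWord_padNone_two_mul_add_one, colorHist_eq_prefixWord]
    rw [hhist, show 2 * n + 1 + 1 = 2 * (n + 1) by ring, interleavePlay_two_mul,
      interleavePlay_two_mul_add_one, hstep n, show (2 * n + 1) / 2 = n by omega]
    rfl

end Plays

theorem stmt6_general {A B Q K : Type u}
    (q0 : Q) (δ : Q → A → B → Q) (col : Q → Q → K)
    (hloc : ∀ q : Q, GFDetermined (δ q)) (W : Set (ℕ → K))
    (hseq : ∃ σB : List (Option K) → Q ⊕ Q × A → B,
      WinB (Sum.inl q0) (seqDelta δ) (seqCol col) (SeqObj W) σB) :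
    ∃ sB : List K → Q → B, WinB q0 δ col W sB := by
  obtain ⟨σB, hσB⟩ := hseq
  choose sB hsB using fun (c : List K) (q : Q) =>
    (hloc q).exists_forall_exists_eq fun a => σB (seqHist c ++ [none]) (Sum.inr (q, a))
  refine ⟨sB, fun π ⟨h0, hπ⟩ hW => ?_⟩
  have hlift : ∀ n, ∃ a, π (n + 1) =
      δ (π n) a (σB (seqHist (colorHist col π n) ++ [none]) (Sum.inr (π n, a))) := by
    intro n
    obtain ⟨a, ha⟩ := hπ n
    rw [ha]
    exact hsB _ _ a
  choose a ha using hlift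
  refine hσB _ (playB_interleavePlay h0 ha) ⟨colorSeq col π, hW, ?_⟩
  rw [colorSeq_seqCol_interleavePlay]
  exact isProjOf_padNone _

/-- If the deterministic concurrent arena is locally determined and Player B has a
winning color strategy in the sequential game `⟨Seq(C), Seq(W)⟩`, then Player B has
a winning color strategy in `⟨C, W⟩`. -/
theorem stmt6 {A B Q K : Type u} [Nonempty A] [Nonempty B] [Nonempty Q] [Nonempty K]
    (q0 : Q) (δ : Q → A → B → Q) (col : Q → Q → K)
    (hloc : ∀ q : Q, GFDetermined (δ q)) (W : Set (ℕ → K))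
    (hseq : ∃ σB : List (Option K) → Q ⊕ Q × A → B,
      WinB (Sum.inl q0) (seqDelta δ) (seqCol col) (SeqObj W) σB) :
    ∃ sB : List K → Q → B, WinB q0 δ col W sB :=
  stmt6_general q0 δ col hloc W hseq
end
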